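/- For a finite DTMC (S, P) and target set B ⊆ S, the reachability probability satisfies the fixed-point equations used by the SMT encoding: Preach s = 1 for every s ∈ B, and Preach s = ∑_{s' ∈ S} P s s' · Preach s' for every s ∉ B. -/

import Mathlib

/-!
The iterates `reachN P B n s` increase with `n` and stay in `[0, 1]`, so they converge to their
supremum. Passing to the limit in the defining recursion, which is a finite sum, gives the
fixed-point equation.
-/

open scoped Classical

/-- n-step reachability values of a target set `B` in a DTMC with transition
function `P`. -/
noncomputable def reachN {S : Type*} [Fintype S] (P : S → S → ℝ) (B : Set S) :
    ℕ → S → ℝ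
  | 0, s => if s ∈ B then 1 else 0
  | n + 1, s => if s ∈ B then 1 else ∑ s' : S, P s s' * reachN P B n s'

open Filter Topology

section reachN

variable {S : Type*} [Fintype S] {P : S → S → ℝ} {B : Set S}

theorem reachN_of_mem {s : S} (hs : s ∈ B) (n : ℕ) : reachN P B n s = 1 := by
  cases n <;> simp [reachN, hs]

theorem reachN_succ_of_notMem {s : S} (hs : s ∉ B) (n : ℕ) :
    reachN P B (n + 1) s = ∑ s' : S, P s s' * reachN P B n s' := by
  simp [reachN, hs]

theorem reachN_nonneg (hP : ∀ s s', 0 ≤ P s s') (n : ℕ) (s : S) : 0 ≤ reachN P B n s := by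
  induction n generalizing s with
  | zero => unfold reachN; split_ifs <;> norm_num
  | succ n ih =>
    unfold reachN
    split_ifs
    · exact zero_le_one
    · exact Finset.sum_nonneg fun s' _ => mul_nonneg (hP s s') (ih s')

theorem reachN_le_one (hP : ∀ s s', 0 ≤ P s s') (hsum : ∀ s, ∑ s', P s s' ≤ 1) (n : ℕ)
    (s : S) : reachN P B n s ≤ 1 := by
  induction n generalizing s with
  | zero => unfold reachN; split_ifs <;> norm_num
  | succ n ih =>
    unfold reachN
    split_ifs
    · exact le_rfl
    · calc ∑ s', P s s' * reachN P B n s'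
          ≤ ∑ s', P s s' := Finset.sum_le_sum fun s' _ => mul_le_of_le_one_right (hP s s') (ih s')
        _ ≤ 1 := hsum s

theorem reachN_monotone (hP : ∀ s s', 0 ≤ P s s') (s : S) :
    Monotone fun n => reachN P B n s := by
  suffices h : ∀ n s, reachN P B n s ≤ reachN P B (n + 1) s from
    monotone_nat_of_le_succ fun n => h n s
  intro n
  induction n with
  | zero =>
    intro s
    unfold reachN
    split_ifs
    · exact le_rfl
    · exact Finset.sum_nonneg fun s' _ => mul_nonneg (hP s s') (reachN_nonneg hP 0 s')
  | succ n ih =>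
    intro s
    unfold reachN
    split_ifs
    · exact le_rfl
    · exact Finset.sum_le_sum fun s' _ => mul_le_mul_of_nonneg_left (ih s') (hP s s')

theorem tendsto_reachN_iSup (hP : ∀ s s', 0 ≤ P s s') (hsum : ∀ s, ∑ s', P s s' ≤ 1) (s : S) :
    Tendsto (fun n => reachN P B n s) atTop (𝓝 (⨆ n, reachN P B n s)) :=
  tendsto_atTop_ciSup (reachN_monotone hP s)
    ⟨1, by rintro _ ⟨n, rfl⟩; exact reachN_le_one hP hsum n s⟩

end reachN

theorem reach_fixedPoint_general {S : Type*} [Fintype S]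
    (P : S → S → ℝ)
    (hP : ∀ s s' : S, 0 ≤ P s s')
    (hsum : ∀ s : S, ∑ s' : S, P s s' = 1)
    (B : Set S) :
    (∀ s ∈ B, (⨆ n : ℕ, reachN P B n s) = 1) ∧
    (∀ s ∉ B,
        (⨆ n : ℕ, reachN P B n s) = ∑ s' : S, P s s' * ⨆ n : ℕ, reachN P B n s') := by
  have htendsto := tendsto_reachN_iSup (B := B) hP fun s => (hsum s).le
  refine ⟨fun s hs => by simp [reachN_of_mem hs], fun s hs => ?_⟩
  have hsucc : Tendsto (fun n => reachN P B (n + 1) s) atTop (𝓝 (⨆ n, reachN P B n s)) :=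
    (htendsto s).comp (tendsto_add_atTop_nat 1)
  have hsum_lim : Tendsto (fun n => ∑ s', P s s' * reachN P B n s') atTop
      (𝓝 (∑ s', P s s' * ⨆ n, reachN P B n s')) :=
    tendsto_finsetSum _ fun s' _ => (htendsto s').const_mul (P s s')
  simp only [reachN_succ_of_notMem hs] at hsucc
  exact tendsto_nhds_unique hsucc hsum_lim

/-- For a finite DTMC (S, P) and target set B ⊆ S, the reachability
probability `Preach s = ⨆ₙ reach n s` satisfies the fixed-point equations used by
the SMT encoding: `Preach s = 1` for `s ∈ B`, and
`Preach s = ∑ s', P s s' * Preach s'` for `s ∉ B`. -/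
theorem reach_fixedPoint {S : Type*} [Fintype S] [Nonempty S]
    (P : S → S → ℝ)
    (hP : ∀ s s' : S, 0 ≤ P s s')
    (hsum : ∀ s : S, ∑ s' : S, P s s' = 1)
    (B : Set S) :
    (∀ s ∈ B, (⨆ n : ℕ, reachN P B n s) = 1) ∧
    (∀ s ∉ B,
        (⨆ n : ℕ, reachN P B n s) = ∑ s' : S, P s s' * ⨆ n : ℕ, reachN P B n s') :=
  reach_fixedPoint_general P hP hsum B
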